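/- Fibonomial specification of identity (4): for all integers 0 ≤ j ≤ i, Σ_{k=j}^{i} C_F(i,k)·C_F(k,j) = C_F(i,j) · Σ_{m=0}^{i−j} C_F(i−j,m) holds in ℚ. -/
import Mathlib


/-- The F-factorial `F_n! = F_n·F_{n−1}!`, `F_0! = 1`, built from Fibonacci numbers. -/
def fibFact : ℕ → ℚ
  | 0 => 1
  | n + 1 => (Nat.fib (n + 1) : ℚ) * fibFact n

/-- The fibonomial coefficient `C_F(n,k) = F_n!/(F_k!·F_{n−k}!) ∈ ℚ`. -/
def fibBinom (n k : ℕ) : ℚ :=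
  fibFact n / (fibFact k * fibFact (n - k))

lemma fibFact_pos : ∀ n, 0 < fibFact n
  | 0 => one_pos
  | n + 1 => by
    have : 0 < Nat.fib (n + 1) := Nat.fib_pos.mpr (Nat.succ_pos n)
    have h := fibFact_pos n
    simp only [fibFact]
    positivity

lemma fibFact_ne (n : ℕ) : fibFact n ≠ 0 := (fibFact_pos n).ne'

lemma key (i j k : ℕ) (hjk : j ≤ k) (hki : k ≤ i) :
    fibBinom i k * fibBinom k j = fibBinom i j * fibBinom (i - j) (k - j) := by
  unfold fibBinom
  have h1 : i - j - (k - j) = i - k := by omega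
  rw [h1]
  field_simp [fibFact_ne]

/-- Fibonomial specification of identity (4): for `0 ≤ j ≤ i`,
`Σ_{k=j}^{i} C_F(i,k)·C_F(k,j) = C_F(i,j) · Σ_{m=0}^{i−j} C_F(i−j,m)` in `ℚ`. -/
theorem fibPascal_one_mul_one_entry :
    ∀ i j : ℕ, j ≤ i →
      ∑ k ∈ Finset.Icc j i, fibBinom i k * fibBinom k j =
        fibBinom i j * ∑ m ∈ Finset.range (i - j + 1), fibBinom (i - j) m := by
  intro i j hji
  rw [Finset.mul_sum]
  rw [Finset.sum_bij' (fun k _ => k - j) (fun m _ => m + j)]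
  · intro k hk
    simp only [Finset.mem_Icc] at hk
    simp only [Finset.mem_range]
    omega
  · intro m hm
    simp only [Finset.mem_range] at hm
    simp only [Finset.mem_Icc]
    omega
  · intro k hk
    simp only [Finset.mem_Icc] at hk
    omega
  · intro m hm; omega
  · intro k hk
    simp only [Finset.mem_Icc] at hk
    exact key i j k hk.1 hk.2
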